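/- Consider a two-node Ising model P(x₁, x₂) ∝ exp(J·x₁x₂ + h·x₁) on {-1,+1}², with |J| ≤ J_max. Then |P(X₁ = x₁ | X₂ = +1) - P(X₁ = x₁ | X₂ = -1)| ≤ tanh(J_max) for every x₁ ∈ {-1,+1}. -/

import Mathlib

/-!
Conditioned on `X₂ = x₂`, the spin `X₁` has effective field `h + J x₂`, so
`P(X₁ = x₁ | X₂ = x₂) = (1 + x₁ tanh (h + J x₂)) / 2` and the difference to bound is
`|tanh (h + J) - tanh (h - J)| / 2`. Since `tanh a - tanh b = sinh (a - b) / (cosh a cosh b)` and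
`cosh (h + J) cosh (h - J) = cosh² J + sinh² h ≥ cosh² J`, this is at most
`|sinh 2J| / (2 cosh² J) = tanh |J| ≤ tanh J_max`: the field `h` only weakens the coupling.
-/

open Real

namespace Real

theorem tanh_sub_tanh (a b : ℝ) : tanh a - tanh b = sinh (a - b) / (cosh a * cosh b) := by
  rw [tanh_eq_sinh_div_cosh, tanh_eq_sinh_div_cosh,
    div_sub_div _ _ (cosh_pos a).ne' (cosh_pos b).ne', sinh_sub]

theorem tanh_monotone : Monotone tanh := fun a b hab => by
  rw [← sub_nonneg, tanh_sub_tanh]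
  exact div_nonneg (sinh_nonneg_iff.2 (sub_nonneg.2 hab)) (mul_pos (cosh_pos b) (cosh_pos a)).le

theorem cosh_add_mul_cosh_sub (x y : ℝ) :
    cosh (x + y) * cosh (x - y) = cosh y ^ 2 + sinh x ^ 2 := by
  rw [cosh_add, cosh_sub]
  linear_combination cosh y ^ 2 * cosh_sq x + sinh x ^ 2 * cosh_sq y

theorem abs_tanh_add_sub_tanh_sub_le (x y : ℝ) :
    |tanh (x + y) - tanh (x - y)| ≤ 2 * tanh |y| := by
  have hcosh := cosh_pos y
  calc |tanh (x + y) - tanh (x - y)|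
      = |sinh (2 * y)| / (cosh (x + y) * cosh (x - y)) := by
        rw [tanh_sub_tanh, abs_div, abs_of_pos (mul_pos (cosh_pos _) (cosh_pos _))]
        ring_nf
    _ ≤ |sinh (2 * y)| / cosh y ^ 2 := by
        gcongr
        rw [cosh_add_mul_cosh_sub]
        exact le_add_of_nonneg_right (sq_nonneg _)
    _ = 2 * tanh |y| := by
        rw [sinh_two_mul, tanh_eq_sinh_div_cosh, ← abs_sinh, cosh_abs, abs_mul, abs_mul,
          abs_two, abs_of_pos hcosh]
        field_simp

end Real

theorem exp_mul_div_exp_add_exp_neg {s : ℝ} (hs : s = 1 ∨ s = -1) (a : ℝ) :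
    exp (s * a) / (exp a + exp (-a)) = (1 + s * tanh a) / 2 := by
  rw [tanh_eq]
  rcases hs with rfl | rfl <;> field_simp <;> ring_nf

/-- Two-node Ising model `P(x₁,x₂) ∝ exp(J x₁ x₂ + h x₁)` with `|J| ≤ J_max`:
the influence of `X₂` on `X₁` is at most `tanh J_max`, for any external field `h`. -/
theorem stmt_4 (J h Jmax : ℝ) (hJ : |J| ≤ Jmax) (x₁ : ℝ) (hx₁ : x₁ = 1 ∨ x₁ = -1) :
    |Real.exp (J * x₁ * 1 + h * x₁) / (Real.exp (J * 1 + h) + Real.exp (-J * 1 - h))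
      - Real.exp (J * x₁ * (-1) + h * x₁) /
          (Real.exp (J * (-1) + h) + Real.exp (-J * (-1) - h))| ≤ Real.tanh Jmax := by
  have hdiff : Real.exp (J * x₁ * 1 + h * x₁) / (Real.exp (J * 1 + h) + Real.exp (-J * 1 - h))
      - Real.exp (J * x₁ * (-1) + h * x₁) / (Real.exp (J * (-1) + h) + Real.exp (-J * (-1) - h))
      = x₁ * (tanh (h + J) - tanh (h - J)) / 2 := by
    rw [show J * x₁ * 1 + h * x₁ = x₁ * (h + J) by ring, show J * 1 + h = h + J by ring,
      show -J * 1 - h = -(h + J) by ring, show J * x₁ * (-1) + h * x₁ = x₁ * (h - J) by ring,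
      show J * (-1) + h = h - J by ring, show -J * (-1) - h = -(h - J) by ring,
      exp_mul_div_exp_add_exp_neg hx₁, exp_mul_div_exp_add_exp_neg hx₁]
    ring
  have hx₁_abs : |x₁| = 1 := by rcases hx₁ with rfl | rfl <;> simp
  rw [hdiff, abs_div, abs_mul, hx₁_abs, abs_two, one_mul]
  linarith [abs_tanh_add_sub_tanh_sub_le h J, tanh_monotone hJ]
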